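/- arXiv:1310.5849 — 3 statements merged into one kernel-verified Lean document; each statement's English description precedes it below -/
import Mathlib

section
/- For all λ, μ > 0, t ≥ 0, k ∈ ℤ and real z > 0, the series Σ_{j∈ℤ} z^{2j+1}·p_{2k,2j+1}(t;λ,μ) converges absolutely and equals e^{−(λ+μ)t}·(z^{2k}/h(z))·λ(z²+1)·sinh(t·h(z)/z). -/
open scoped BigOperators

/-- Inner binomial sum `∑_{k=0}^{n-m} C(n,k) C(n,k+m) ρ^{-2k-m}`. -/
noncomputable def innerSum (ρ : ℝ) (m n : ℕ) : ℝ :=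
  ∑ k ∈ Finset.range (n - m + 1),
    (n.choose k : ℝ) * (n.choose (k + m) : ℝ) * ρ ^ (-(2 * (k : ℤ) + (m : ℤ)))

/-- Series `∑_{n≥m} [x^{2n}/(2n)! + c·x^{2n+1}/(2n+1)!]·innerSum ρ m n`. -/
noncomputable def evenSeries (x c ρ : ℝ) (m : ℕ) : ℝ :=
  ∑' j : ℕ,
    ((x ^ (2 * (m + j)) / (2 * (m + j)).factorial) +
      c * (x ^ (2 * (m + j) + 1) / (2 * (m + j) + 1).factorial)) * innerSum ρ m (m + j)

/-- Series `∑_{n≥m} x^{2n+1}/(2n+1)!·innerSum ρ m n`. -/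
noncomputable def oddSeries (x ρ : ℝ) (m : ℕ) : ℝ :=
  ∑' j : ℕ,
    (x ^ (2 * (m + j) + 1) / (2 * (m + j) + 1).factorial) * innerSum ρ m (m + j)

/-- `p_{2l,2r}(t;λ,μ)`. -/
noncomputable def pEE (lam mu t : ℝ) (l r : ℤ) : ℝ :=
  Real.exp (-(lam + mu) * t) *
    evenSeries (lam * t) ((mu - lam) / lam) (lam / mu) (r - l).natAbs

/-- `p_{2l,2r+1}(t;λ,μ)`. -/
noncomputable def pEO (lam mu t : ℝ) (l r : ℤ) : ℝ :=
  Real.exp (-(lam + mu) * t) *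
    (oddSeries (lam * t) (lam / mu) (r - l).natAbs +
      oddSeries (lam * t) (lam / mu) (r - l + 1).natAbs)

/-- `p_{2l+1,2r}(t;λ,μ)`. -/
noncomputable def pOE (lam mu t : ℝ) (l r : ℤ) : ℝ :=
  Real.exp (-(lam + mu) * t) *
    (oddSeries (mu * t) (mu / lam) (r - l - 1).natAbs +
      oddSeries (mu * t) (mu / lam) (r - l).natAbs)

/-- `p_{2l+1,2r+1}(t;λ,μ)`. -/
noncomputable def pOO (lam mu t : ℝ) (l r : ℤ) : ℝ :=
  Real.exp (-(lam + mu) * t) *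
    evenSeries (mu * t) ((lam - mu) / mu) (mu / lam) (r - l).natAbs

/-- Transition probability `p_{k,n}(t;λ,μ)`, by parity of the states. -/
noncomputable def transP (lam mu t : ℝ) (k n : ℤ) : ℝ :=
  if k % 2 = 0 then
    if n % 2 = 0 then pEE lam mu t (k / 2) (n / 2)
    else pEO lam mu t (k / 2) ((n - 1) / 2)
  else
    if n % 2 = 0 then pOE lam mu t ((k - 1) / 2) (n / 2)
    else pOO lam mu t ((k - 1) / 2) ((n - 1) / 2)

/-- `h(z) = √((μz²+λ)(λz²+μ))`. -/
noncomputable def hFun (lam mu z : ℝ) : ℝ := Real.sqrt ((mu * z ^ 2 + lam) * (lam * z ^ 2 + mu))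

/-!
Write `ρ = λ/μ` and `x = λt`. Then `p_{2k,2j+1}` is `e^{-(λ+μ)t}` times
`oddSeries x ρ |j-k| + oddSeries x ρ |j-k+1|`, so after shifting the index the series is
`e^{-(λ+μ)t} z^{2k} (z + z⁻¹) ∑_m z^{2m} oddSeries x ρ |m|`. The inner binomial sums
`innerSum ρ |m| n` are the Laurent coefficients in `z²` of `((1 + z²/ρ)(1 + 1/(z²ρ)))ⁿ = s^{2n}`,
where `s = h(z)/(λz)`. All terms being nonnegative, the double series over `(n, m)` may be summed
over `m` first, which leaves `∑_n x^{2n+1} s^{2n}/(2n+1)! = sinh(xs)/s`.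
-/

open Finset

lemma innerSum_eq_zero_of_lt {ρ : ℝ} {m n : ℕ} (h : n < m) : innerSum ρ m n = 0 := by
  simp [innerSum, Nat.sub_eq_zero_of_le h.le, Nat.choose_eq_zero_of_lt h]

lemma innerSum_nonneg {ρ : ℝ} (hρ : 0 ≤ ρ) (m n : ℕ) : 0 ≤ innerSum ρ m n :=
  sum_nonneg fun _ _ => by positivity

lemma innerSum_eq_sum_inv_pow (ρ : ℝ) (m n : ℕ) :
    innerSum ρ m n = ∑ k ∈ range (n - m + 1),
      (n.choose k : ℝ) * (n.choose (k + m) : ℝ) * ρ⁻¹ ^ (2 * k + m) := by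
  refine sum_congr rfl fun k _ => ?_
  rw [inv_pow, ← zpow_natCast, ← zpow_neg]
  push_cast
  rfl

/-- Expand both binomials and group the terms `(w ρ⁻¹)ⁱ (w⁻¹ ρ⁻¹)ʲ` by `m = i - j`. -/
lemma sum_zpow_mul_innerSum {w : ℝ} (hw : w ≠ 0) (ρ : ℝ) (n : ℕ) :
    ∑ m ∈ Icc (-(n : ℤ)) n, w ^ m * innerSum ρ m.natAbs n =
      ((1 + w * ρ⁻¹) * (1 + w⁻¹ * ρ⁻¹)) ^ n := by
  rw [mul_pow, add_comm 1, add_comm 1, add_pow, add_pow, sum_mul_sum, ← sum_product']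
  simp_rw [innerSum_eq_sum_inv_pow, mul_sum]
  rw [sum_sigma']
  refine sum_nbij' (fun p => (p.2 + p.1.toNat, p.2 + (-p.1).toNat))
    (fun p => ⟨(p.1 : ℤ) - p.2, min p.1 p.2⟩) ?_ ?_ ?_ ?_ ?_
  · rintro ⟨m, k⟩ h
    simp only [mem_sigma, mem_Icc, mem_range] at h
    simp only [mem_product, mem_range]
    omega
  · rintro ⟨i, j⟩ h
    simp only [mem_product, mem_range] at h
    simp only [mem_sigma, mem_Icc, mem_range]
    omega
  · rintro ⟨m, k⟩ -
    simp only [Sigma.mk.injEq, heq_eq_eq]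
    omega
  · rintro ⟨i, j⟩ -
    simp only [Prod.mk.injEq]
    omega
  · rintro ⟨m, k⟩ -
    obtain ⟨a, rfl | rfl⟩ := Int.eq_nat_or_neg m <;>
    simp only [neg_neg, Int.toNat_natCast, Int.toNat_neg_natCast, Int.natAbs_neg,
      Int.natAbs_natCast, zpow_neg, zpow_natCast, add_zero, one_pow, mul_one, mul_pow, inv_pow,
      pow_add] <;>
    field_simp <;>
    ring

lemma hasSum_zpow_mul_innerSum {w : ℝ} (hw : w ≠ 0) (ρ : ℝ) (n : ℕ) :
    HasSum (fun m : ℤ => w ^ m * innerSum ρ m.natAbs n)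
      (((1 + w * ρ⁻¹) * (1 + w⁻¹ * ρ⁻¹)) ^ n) := by
  rw [← sum_zpow_mul_innerSum hw]
  refine hasSum_sum_of_ne_finset_zero fun m hm => ?_
  rw [innerSum_eq_zero_of_lt (by simp only [mem_Icc] at hm; omega), mul_zero]

lemma oddSeries_eq_tsum (x ρ : ℝ) (m : ℕ) :
    oddSeries x ρ m = ∑' n, x ^ (2 * n + 1) / (2 * n + 1).factorial * innerSum ρ m n := by
  refine Function.Injective.tsum_eq (f := fun n => x ^ (2 * n + 1) / (2 * n + 1).factorial *
    innerSum ρ m n) (add_right_injective m) fun n hn => ?_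
  obtain h | h := lt_or_ge n m
  · simp [innerSum_eq_zero_of_lt h] at hn
  · exact ⟨n - m, Nat.add_sub_cancel' h⟩

lemma Real.hasSum_sinh_mul_div (x : ℝ) {s : ℝ} (hs : s ≠ 0) :
    HasSum (fun n => x ^ (2 * n + 1) / (2 * n + 1).factorial * s ^ (2 * n))
      (Real.sinh (x * s) / s) :=
  ((Real.hasSum_sinh (x * s)).div_const s).congr_fun fun n => by field_simp; ring

theorem hasSum_zpow_mul_oddSeries {x ρ w s : ℝ} (hx : 0 ≤ x) (hρ : 0 ≤ ρ) (hw : 0 < w)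
    (hs : s ^ 2 = (1 + w * ρ⁻¹) * (1 + w⁻¹ * ρ⁻¹)) (hs0 : s ≠ 0) :
    HasSum (fun m : ℤ => w ^ m * oddSeries x ρ m.natAbs) (Real.sinh (x * s) / s) := by
  set c : ℕ → ℝ := fun n => x ^ (2 * n + 1) / (2 * n + 1).factorial
  set F : ℕ × ℤ → ℝ := fun p => w ^ p.2 * (c p.1 * innerSum ρ p.2.natAbs p.1)
  have hF0 : 0 ≤ F := fun p => by
    have := innerSum_nonneg hρ p.2.natAbs p.1
    positivity
  have hrow (n : ℕ) : HasSum (fun m => F (n, m)) (c n * s ^ (2 * n)) := by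
    rw [pow_mul, hs]
    exact ((hasSum_zpow_mul_innerSum hw.ne' ρ n).mul_left (c n)).congr_fun fun m => by ring
  have hrows := Real.hasSum_sinh_mul_div x hs0
  have hF : Summable F := (summable_prod_of_nonneg hF0).2
    ⟨fun n => (hrow n).summable, hrows.summable.congr fun n => ((hrow n).tsum_eq).symm⟩
  have hFsum : HasSum F (Real.sinh (x * s) / s) := by
    rw [← (hF.hasSum.prod_fiberwise hrow).unique hrows]
    exact hF.hasSum
  have hFswap := (Equiv.prodComm ℤ ℕ).hasSum_iff.2 hFsum
  refine hFswap.prod_fiberwise fun m => ?_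
  have hcol := (hFswap.summable.prod_factor m).hasSum
  simp only [Function.comp_apply, Equiv.prodComm_apply, Prod.swap_prod_mk, F, c, tsum_mul_left,
    ← oddSeries_eq_tsum] at hcol
  exact hcol

lemma HasSum.zpow_two_mul_add_one_mul_add_succ {z S : ℝ} {f : ℤ → ℝ} (hz : z ≠ 0)
    (h : HasSum (fun m : ℤ => (z ^ 2) ^ m * f m) S) :
    HasSum (fun m : ℤ => z ^ (2 * m + 1) * (f m + f (m + 1))) ((z + z⁻¹) * S) := by
  have hshift : HasSum (fun m : ℤ => (z ^ 2) ^ (m + 1) * f (m + 1)) S :=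
    (Equiv.addRight (1 : ℤ)).hasSum_iff (f := fun m => (z ^ 2) ^ m * f m) |>.2 h
  rw [add_mul]
  refine ((h.mul_left z).add (hshift.mul_left z⁻¹)).congr_fun fun m => ?_
  have hsq (n : ℤ) : (z ^ 2) ^ n = z ^ (2 * n) := by rw [zpow_mul]; norm_cast
  rw [hsq, hsq, show 2 * (m + 1) = 2 * m + 1 + 1 by ring, zpow_add_one₀ hz (2 * m + 1),
    zpow_add_one₀ hz (2 * m)]
  field_simp

lemma transP_two_mul_two_mul_add_one (lam mu t : ℝ) (k j : ℤ) :
    transP lam mu t (2 * k) (2 * j + 1) = pEO lam mu t k j := by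
  simp [transP]

/-- Even–odd generating function: `∑_{j∈ℤ} z^{2j+1} p_{2k,2j+1}(t)` converges absolutely and
equals `e^{-(λ+μ)t}·(z^{2k}/h(z))·λ(z²+1)sinh(t h(z)/z)`. -/
theorem even_odd_generating_function (lam mu : ℝ) (hlam : 0 < lam) (hmu : 0 < mu)
    (t : ℝ) (ht : 0 ≤ t) (k : ℤ) (z : ℝ) (hz : 0 < z) :
    Summable (fun j : ℤ => |z ^ (2 * j + 1) * transP lam mu t (2 * k) (2 * j + 1)|) ∧
    ∑' j : ℤ, z ^ (2 * j + 1) * transP lam mu t (2 * k) (2 * j + 1) =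
      Real.exp (-(lam + mu) * t) * (z ^ (2 * k) / hFun lam mu z) *
        (lam * (z ^ 2 + 1) * Real.sinh (t * hFun lam mu z / z)) := by
  have hh : 0 < hFun lam mu z := Real.sqrt_pos.2 (by positivity)
  have hs : (hFun lam mu z / (lam * z)) ^ 2 =
      (1 + z ^ 2 * (lam / mu)⁻¹) * (1 + (z ^ 2)⁻¹ * (lam / mu)⁻¹) := by
    rw [div_pow, hFun, Real.sq_sqrt (by positivity)]
    field_simp
    ring
  have hW := (hasSum_zpow_mul_oddSeries (mul_nonneg hlam.le ht) (div_pos hlam hmu).le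
    (pow_pos hz 2) hs (by positivity)).zpow_two_mul_add_one_mul_add_succ hz.ne'
  have hterm (j : ℤ) : z ^ (2 * j + 1) * transP lam mu t (2 * k) (2 * j + 1) =
      Real.exp (-(lam + mu) * t) * z ^ (2 * k) * (z ^ (2 * (j - k) + 1) *
        (oddSeries (lam * t) (lam / mu) (j - k).natAbs +
          oddSeries (lam * t) (lam / mu) (j - k + 1).natAbs)) := by
    rw [transP_two_mul_two_mul_add_one, pEO, show 2 * j + 1 = 2 * k + (2 * (j - k) + 1) by ring,
      zpow_add₀ hz.ne']
    ring
  have hsum := ((Equiv.subRight k).hasSum_iff.2 hW).mul_left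
    (Real.exp (-(lam + mu) * t) * z ^ (2 * k))
  simp only [Function.comp_apply, Equiv.subRight_apply, ← hterm] at hsum
  refine ⟨hsum.summable.abs, ?_⟩
  rw [hsum.tsum_eq]
  field_simp
end

section
/- Let λ, μ > 0, z > 0, t ≥ 0 and k ∈ ℤ, and let A be the 2×2 real matrix A := [[−2λ, μ(z²+1)/z], [λ(z²+1)/z, −2μ]]. Then the matrix exponential satisfies exp(tA)·(z^{2k}, 0)ᵀ = e^{−(λ+μ)t}·(z^{2k}/h(z))·( h(z)·cosh(t·h(z)/z) + z(μ−λ)·sinh(t·h(z)/z), λ(z²+1)·sinh(t·h(z)/z) )ᵀ and exp(tA)·(0, z^{2k+1})ᵀ = e^{−(λ+μ)t}·(z^{2k+1}/h(z))·( μ(z²+1)·sinh(t·h(z)/z), h(z)·cosh(t·h(z)/z) + z(λ−μ)·sinh(t·h(z)/z) )ᵀ. -/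
/-!
Write `t • A = -(λ + μ) t • 1 + t • B` with `B` traceless. For a traceless `2 × 2` matrix,
`B * B = -det B • 1`, and here `-det B = (h / z) ^ 2`. Whenever `B * B = ω ^ 2 • 1` the even and odd
parts of the exponential series of `t • B` are the series of `cosh (t ω)` and `sinh (t ω) / ω`,
so `exp (t • B) = cosh (t ω) • 1 + (sinh (t ω) / ω) • B`.
-/

open Matrix

namespace NormedSpace

variable {𝔸 : Type*} [NormedRing 𝔸] [NormedAlgebra ℝ 𝔸] [CompleteSpace 𝔸]

theorem exp_smul_of_mul_self_eq_smul_one {B : 𝔸} {ω : ℝ} (hω : ω ≠ 0)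
    (hB : B * B = ω ^ 2 • (1 : 𝔸)) (t : ℝ) :
    exp (t • B) = Real.cosh (t * ω) • (1 : 𝔸) + (Real.sinh (t * ω) / ω) • B := by
  have hsq : (t • B) ^ 2 = (t * ω) ^ 2 • (1 : 𝔸) := by
    rw [sq, smul_mul_smul_comm, hB, smul_smul]
    ring_nf
  have heven (n : ℕ) : (t • B) ^ (2 * n) = (t * ω) ^ (2 * n) • (1 : 𝔸) := by
    rw [pow_mul, hsq, smul_pow, one_pow, pow_mul]
  refine (exp_series_hasSum_exp' (𝕂 := ℝ) (t • B)).unique (HasSum.even_add_odd ?_ ?_)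
  · convert (Real.hasSum_cosh (t * ω)).smul_const (1 : 𝔸) using 2 with n
    rw [heven, smul_smul, div_eq_inv_mul]
  · convert ((Real.hasSum_sinh (t * ω)).div_const ω).smul_const B using 2 with n
    rw [pow_succ, heven, smul_one_mul, smul_smul, smul_smul]
    congr 1
    field_simp
    ring

theorem exp_smul_one_add (c : ℝ) (B : 𝔸) : exp (c • (1 : 𝔸) + B) = Real.exp c • exp B := by
  let : NormedAlgebra ℚ 𝔸 := .restrictScalars ℚ ℝ 𝔸
  rw [exp_add_of_commute ((Commute.one_left B).smul_left c), ← Algebra.algebraMap_eq_smul_one,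
    ← algebraMap_exp_comm, Real.exp_eq_exp_ℝ, Algebra.algebraMap_eq_smul_one, smul_one_mul]

end NormedSpace

theorem Matrix.traceless_fin_two_mul_self {R : Type*} [CommRing R] (a b c : R) :
    !![a, b; c, -a] * !![a, b; c, -a] = (a ^ 2 + b * c) • (1 : Matrix (Fin 2) (Fin 2) R) := by
  ext i j
  fin_cases i <;> fin_cases j <;> simp [mul_apply, Fin.sum_univ_two] <;> ring

theorem hFun_pos {lam mu : ℝ} (hlam : 0 < lam) (hmu : 0 < mu) (z : ℝ) : 0 < hFun lam mu z :=
  Real.sqrt_pos.mpr (by positivity)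

theorem hFun_div_sq {lam mu z : ℝ} (hlam : 0 ≤ lam) (hmu : 0 ≤ mu) (hz : z ≠ 0) :
    (hFun lam mu z / z) ^ 2 =
      (mu - lam) ^ 2 + mu * (z ^ 2 + 1) / z * (lam * (z ^ 2 + 1) / z) := by
  rw [div_pow, hFun, Real.sq_sqrt (by positivity)]
  field_simp
  ring

theorem matrix_exponential_action_general (lam mu z t : ℝ) (hlam : 0 < lam) (hmu : 0 < mu)
    (hz : 0 < z) (k : ℤ) :
    let h : ℝ := hFun lam mu z
    let A : Matrix (Fin 2) (Fin 2) ℝ :=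
      !![-2 * lam, mu * (z ^ 2 + 1) / z; lam * (z ^ 2 + 1) / z, -2 * mu]
    (NormedSpace.exp (t • A)).mulVec ![z ^ (2 * k), 0] =
      (Real.exp (-(lam + mu) * t) * (z ^ (2 * k) / h)) •
        ![h * Real.cosh (t * h / z) + z * (mu - lam) * Real.sinh (t * h / z),
          lam * (z ^ 2 + 1) * Real.sinh (t * h / z)] ∧
    (NormedSpace.exp (t • A)).mulVec ![0, z ^ (2 * k + 1)] =
      (Real.exp (-(lam + mu) * t) * (z ^ (2 * k + 1) / h)) •
        ![mu * (z ^ 2 + 1) * Real.sinh (t * h / z),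
          h * Real.cosh (t * h / z) + z * (lam - mu) * Real.sinh (t * h / z)] := by
  intro h A
  have hh : 0 < h := hFun_pos hlam hmu z
  set B : Matrix (Fin 2) (Fin 2) ℝ :=
    !![mu - lam, mu * (z ^ 2 + 1) / z; lam * (z ^ 2 + 1) / z, -(mu - lam)]
  have hA : t • A = (-(lam + mu) * t) • (1 : Matrix (Fin 2) (Fin 2) ℝ) + t • B := by
    ext i j
    fin_cases i <;> fin_cases j <;> simp [A, B] <;> ring
  have hB : B * B = (h / z) ^ 2 • (1 : Matrix (Fin 2) (Fin 2) ℝ) := by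
    rw [traceless_fin_two_mul_self, hFun_div_sq hlam.le hmu.le hz.ne']
  have hexp : NormedSpace.exp (t • A) = Real.exp (-(lam + mu) * t) •
      (Real.cosh (t * (h / z)) • 1 + (Real.sinh (t * (h / z)) / (h / z)) • B) := by
    open scoped Norms.Operator in
    rw [hA]
    exact (NormedSpace.exp_smul_one_add _ _).trans <| congrArg _ <|
      NormedSpace.exp_smul_of_mul_self_eq_smul_one (div_pos hh hz).ne' hB t
  rw [hexp]
  constructor <;> ext i <;> fin_cases i <;>
    simp [B, mulVec, dotProduct, Fin.sum_univ_two] <;> field_simp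

/-- Action of the matrix exponential `exp(tA)` on the initial vectors `(z^{2k},0)ᵀ` and
`(0,z^{2k+1})ᵀ`. -/
theorem matrix_exponential_action (lam mu z t : ℝ) (hlam : 0 < lam) (hmu : 0 < mu)
    (hz : 0 < z) (ht : 0 ≤ t) (k : ℤ) :
    let h : ℝ := hFun lam mu z
    let A : Matrix (Fin 2) (Fin 2) ℝ :=
      !![-2 * lam, mu * (z ^ 2 + 1) / z; lam * (z ^ 2 + 1) / z, -2 * mu]
    (NormedSpace.exp (t • A)).mulVec ![z ^ (2 * k), 0] =
      (Real.exp (-(lam + mu) * t) * (z ^ (2 * k) / h)) •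
        ![h * Real.cosh (t * h / z) + z * (mu - lam) * Real.sinh (t * h / z),
          lam * (z ^ 2 + 1) * Real.sinh (t * h / z)] ∧
    (NormedSpace.exp (t • A)).mulVec ![0, z ^ (2 * k + 1)] =
      (Real.exp (-(lam + mu) * t) * (z ^ (2 * k + 1) / h)) •
        ![mu * (z ^ 2 + 1) * Real.sinh (t * h / z),
          h * Real.cosh (t * h / z) + z * (lam - mu) * Real.sinh (t * h / z)] :=
  matrix_exponential_action_general lam mu z t hlam hmu hz k
end

section
/- Let λ, μ > 0. Then for every k ∈ ℤ and t ≥ 0 the series Σ_{n∈ℤ} n·p_{k,n}(t;λ,μ) converges absolutely and its sum equals k; i.e., the mean of the process at any time equals the initial state. -/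
/-!
Write `a = μ/λ`. Both `evenSeries` and `oddSeries` have the form `G m = ∑ₙ cₙ Bₘ(n)` with
`Bₘ(n) = ∑ₖ C(n,k) C(n,k+m) a^(2k+m)` (`binomPairSum a m n`), and `B_{|m|}(n)` collects exactly
the terms with `i - j = m` of `((1 + a)ⁿ)² = ∑_{i,j} C(n,i) C(n,j) a^(i+j)`. Hence
`∑_{m ∈ ℤ} B_{|m|}(n) = (1 + a)^(2n)`, and exchanging the sums turns the row of transition
probabilities from an even state into `e^{-(λ+μ)t} (cosh + sinh)((λ+μ)t) = 1`. Since
`B_{|m|}(n) = 0` for `|m| > n`, the first moment is dominated by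
`∑ₙ (n + 1) |cₙ| (1 + a)^(2n) < ∞`. The row is symmetric about the starting state, so its mean is
that state. An odd starting state is an even one for the process with `λ` and `μ` exchanged,
reflected by `n ↦ 1 - n`.
-/

open scoped BigOperators

open Finset Real Nat

theorem HasSum.int_even_add_odd {M : Type*} [AddCommMonoid M] [TopologicalSpace M] [ContinuousAdd M]
    {f : ℤ → M} {m m' : M} (he : HasSum (fun k => f (2 * k)) m)
    (ho : HasSum (fun k => f (2 * k + 1)) m') : HasSum f (m + m') := by
  have := mul_right_injective₀ (two_ne_zero' ℤ)
  replace ho := ((add_left_injective 1).comp this).hasSum_range_iff.2 ho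
  refine (this.hasSum_range_iff.2 he).add_isCompl ?_ ho
  simpa [Function.comp_def] using Int.isCompl_even_odd

theorem Summable.int_even_add_odd {M : Type*} [AddCommMonoid M] [TopologicalSpace M]
    [ContinuousAdd M] {f : ℤ → M} (he : Summable fun k => f (2 * k))
    (ho : Summable fun k => f (2 * k + 1)) : Summable f :=
  (he.hasSum.int_even_add_odd ho.hasSum).summable

theorem HasSum.comp_sub_right {G M : Type*} [AddGroup G] [AddCommMonoid M] [TopologicalSpace M]
    {f : G → M} {m : M} (hf : HasSum f m) (e : G) : HasSum (fun r => f (r - e)) m :=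
  (Equiv.subRight e).hasSum_iff.mpr hf

theorem Summable.affine_mul_comp_sub {f : ℤ → ℝ} (hf : Summable f)
    (hf₁ : Summable fun m : ℤ => (m : ℝ) * f m) (α β : ℝ) (e : ℤ) :
    Summable fun r : ℤ => (α * r + β) * f (r - e) := by
  refine (((hf₁.hasSum.comp_sub_right e).summable.mul_left α).add
    ((hf.hasSum.comp_sub_right e).summable.mul_left (α * e + β))).congr fun r => ?_
  push_cast
  ring

structure SymmetricUnitMass (p : ℤ → ℝ) (k : ℤ) : Prop where
  hasSum : HasSum p 1
  summable_mul : Summable fun n : ℤ => (n : ℝ) * p n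
  symm : ∀ d, p (k + d) = p (k - d)

namespace SymmetricUnitMass

variable {p : ℤ → ℝ} {k : ℤ}

theorem hasSum_mul (hp : SymmetricUnitMass p k) : HasSum (fun n : ℤ => (n : ℝ) * p n) k := by
  set q : ℤ → ℝ := fun d => d * p (k + d)
  have hshift : HasSum (fun d => p (k + d)) 1 := (Equiv.addLeft k).hasSum_iff.mpr hp.hasSum
  have hq : Summable q := by
    refine (((Equiv.addLeft k).summable_iff.mpr hp.summable_mul).sub
      (hshift.summable.mul_left (k : ℝ))).congr fun d => ?_
    simp only [Function.comp_apply, Equiv.coe_addLeft, q]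
    push_cast
    ring
  have hq_odd : ∀ d, q (-d) = -q d := by
    intro d
    simp only [q, ← sub_eq_add_neg, ← hp.symm]
    push_cast
    ring
  have hq_zero : HasSum q 0 := by
    have h := ((Equiv.neg ℤ).hasSum_iff.mpr hq.hasSum).neg
    simp only [Function.comp_def, Equiv.neg_apply, hq_odd, neg_neg] at h
    have hs : ∑' d, q d = 0 := by linarith [h.unique hq.hasSum]
    exact hs ▸ hq.hasSum
  have hsplit : (fun n : ℤ => (n : ℝ) * p n) ∘ Equiv.addLeft k = fun d => k * p (k + d) + q d := by
    funext d
    simp only [Function.comp_apply, Equiv.coe_addLeft, q]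
    push_cast
    ring
  rw [← (Equiv.addLeft k).hasSum_iff, hsplit]
  simpa using (hshift.mul_left (k : ℝ)).add hq_zero

theorem comp_one_sub (hp : SymmetricUnitMass p k) :
    SymmetricUnitMass (fun n => p (1 - n)) (1 - k) where
  hasSum := (Equiv.subLeft 1).hasSum_iff.mpr hp.hasSum
  summable_mul := by
    refine (((Equiv.subLeft 1).summable_iff.mpr hp.hasSum.summable).sub
      ((Equiv.subLeft 1).summable_iff.mpr hp.summable_mul)).congr fun n => ?_
    simp only [Function.comp_apply, Equiv.subLeft_apply]
    push_cast
    ring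
  symm d := by
    rw [show 1 - (1 - k + d) = k - d by ring, show 1 - (1 - k - d) = k + d by ring, hp.symm]

end SymmetricUnitMass

noncomputable def binomPairSum (a : ℝ) (m n : ℕ) : ℝ :=
  ∑ k ∈ range (n + 1), (n.choose k : ℝ) * n.choose (k + m) * a ^ (2 * k + m)

theorem innerSum_eq_binomPairSum (ρ : ℝ) (m n : ℕ) : innerSum ρ m n = binomPairSum ρ⁻¹ m n := by
  refine (Finset.sum_subset (range_subset_range.mpr (by omega : n - m + 1 ≤ n + 1))
    (fun k _ hk => ?_)).trans ?_
  · rw [Nat.choose_eq_zero_of_lt (n := n) (k := k + m) (by simp only [mem_range] at hk; omega)]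
    simp
  · refine Finset.sum_congr rfl fun k _ => ?_
    rw [show -(2 * (k : ℤ) + m) = -((2 * k + m : ℕ) : ℤ) by push_cast; ring, zpow_neg, zpow_natCast,
      inv_pow]

theorem binomPairSum_nonneg {a : ℝ} (ha : 0 ≤ a) (m n : ℕ) : 0 ≤ binomPairSum a m n := by
  unfold binomPairSum; positivity

theorem binomPairSum_of_lt (a : ℝ) {m n : ℕ} (h : n < m) : binomPairSum a m n = 0 :=
  Finset.sum_eq_zero fun k _ => by simp [Nat.choose_eq_zero_of_lt (by omega : n < k + m)]

theorem binomPairSum_eq_sum_sum_ite (a : ℝ) (m n : ℕ) :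
    binomPairSum a m n = ∑ j ∈ range (n + 1), ∑ i ∈ range (n + 1),
      if i = j + m then (n.choose i * a ^ i) * (n.choose j * a ^ j) else 0 := by
  refine Finset.sum_congr rfl fun j _ => ?_
  rw [Finset.sum_ite_eq']
  split_ifs with h
  · ring
  · simp [Nat.choose_eq_zero_of_lt (by simpa using h : n < j + m)]

theorem hasSum_binomPairSum_natAbs (a : ℝ) (n : ℕ) :
    HasSum (fun m : ℤ => binomPairSum a m.natAbs n) ((1 + a) ^ (2 * n)) := by
  set w : ℕ → ℕ → ℝ := fun i j => (n.choose i * a ^ i) * (n.choose j * a ^ j)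
  have hdiff : ∀ m : ℤ, binomPairSum a m.natAbs n =
      ∑ i ∈ range (n + 1), ∑ j ∈ range (n + 1), if m = (i : ℤ) - j then w i j else 0 := by
    intro m
    obtain ⟨m, rfl | rfl⟩ := Int.eq_nat_or_neg m
    · rw [Int.natAbs_natCast, binomPairSum_eq_sum_sum_ite, Finset.sum_comm]
      refine Finset.sum_congr rfl fun i _ => Finset.sum_congr rfl fun j _ => ?_
      exact if_congr (by omega) rfl rfl
    · rw [Int.natAbs_neg, Int.natAbs_natCast, binomPairSum_eq_sum_sum_ite]
      refine Finset.sum_congr rfl fun i _ => Finset.sum_congr rfl fun j _ => ?_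
      exact if_congr (by omega) (mul_comm _ _) rfl
  have hsquare : (1 + a) ^ (2 * n) = ∑ i ∈ range (n + 1), ∑ j ∈ range (n + 1), w i j := by
    rw [two_mul, pow_add, add_comm, add_pow, Finset.sum_mul_sum]
    simp only [one_pow, mul_one]
    exact Finset.sum_congr rfl fun i _ => Finset.sum_congr rfl fun j _ => by ring
  rw [hsquare, funext hdiff]
  exact hasSum_sum fun i _ => hasSum_sum fun j _ => hasSum_ite_eq _ _

noncomputable def binomPairSeries (coef : ℕ → ℝ) (a : ℝ) (m : ℕ) : ℝ :=
  ∑' n, coef n * binomPairSum a m n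

theorem tsum_add_left_eq_binomPairSeries (coef : ℕ → ℝ) (a : ℝ) (m : ℕ) :
    ∑' j, coef (m + j) * binomPairSum a m (m + j) = binomPairSeries coef a m := by
  refine (add_right_injective m).tsum_eq (f := fun n => coef n * binomPairSum a m n) fun n hn => ?_
  have hmn : m ≤ n := by
    by_contra h
    exact hn (by simp [binomPairSum_of_lt a (not_le.mp h)])
  exact ⟨n - m, Nat.add_sub_cancel' hmn⟩

theorem cast_mul_binomPairSum_le {a : ℝ} (ha : 0 ≤ a) (m n : ℕ) :
    (m : ℝ) * binomPairSum a m n ≤ (n + 1) * binomPairSum a m n := by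
  rcases le_or_gt m n with h | h
  · exact mul_le_mul_of_nonneg_right (by exact_mod_cast h.trans n.le_succ)
      (binomPairSum_nonneg ha m n)
  · simp [binomPairSum_of_lt a h]

section binomPairSeries

variable {coef : ℕ → ℝ} {a : ℝ}

theorem summable_succ_mul_abs_mul_binomPairSum (ha : 0 ≤ a)
    (hcoef : Summable fun n : ℕ => ((n : ℝ) + 1) * |coef n| * (1 + a) ^ (2 * n)) :
    Summable fun q : ℤ × ℕ => ((q.2 : ℝ) + 1) * |coef q.2| * binomPairSum a q.1.natAbs q.2 := by
  have hswap : Summable fun q : ℕ × ℤ =>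
      ((q.1 : ℝ) + 1) * |coef q.1| * binomPairSum a q.2.natAbs q.1 := by
    refine (summable_prod_of_nonneg fun q => ?_).mpr ⟨fun n => ?_, ?_⟩
    · have := binomPairSum_nonneg ha q.2.natAbs q.1
      dsimp only [Pi.zero_apply]
      positivity
    · exact ((hasSum_binomPairSum_natAbs a n).mul_left (((n : ℝ) + 1) * |coef n|)).summable
    · simpa only [tsum_mul_left, (hasSum_binomPairSum_natAbs a _).tsum_eq] using hcoef
  exact hswap.prod_symm

theorem hasSum_binomPairSeries_natAbs (ha : 0 ≤ a)
    (hcoef : Summable fun n : ℕ => ((n : ℝ) + 1) * |coef n| * (1 + a) ^ (2 * n)) {S : ℝ}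
    (hS : HasSum (fun n => coef n * (1 + a) ^ (2 * n)) S) :
    HasSum (fun m : ℤ => binomPairSeries coef a m.natAbs) S := by
  set F : ℤ × ℕ → ℝ := fun q => coef q.2 * binomPairSum a q.1.natAbs q.2
  have hF : Summable F := by
    refine (summable_succ_mul_abs_mul_binomPairSum ha hcoef).of_norm_bounded fun q => ?_
    have hB := binomPairSum_nonneg ha q.1.natAbs q.2
    rw [Real.norm_eq_abs, abs_mul, abs_of_nonneg hB, mul_assoc]
    exact le_mul_of_one_le_left (by positivity) (by linarith [q.2.cast_nonneg (α := ℝ)])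
  have hT : HasSum (fun n => coef n * (1 + a) ^ (2 * n)) (∑' q, F q) :=
    ((Equiv.prodComm ℕ ℤ).hasSum_iff.mpr hF.hasSum).prod_fiberwise fun n =>
      (hasSum_binomPairSum_natAbs a n).mul_left (coef n)
  rw [hS.unique hT]
  exact hF.hasSum.prod_fiberwise fun m => (hF.prod_factor m).hasSum

theorem summable_mul_binomPairSeries_natAbs (ha : 0 ≤ a)
    (hcoef : Summable fun n : ℕ => ((n : ℝ) + 1) * |coef n| * (1 + a) ^ (2 * n)) :
    Summable fun m : ℤ => (m : ℝ) * binomPairSeries coef a m.natAbs := by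
  set F : ℤ × ℕ → ℝ := fun q => q.1 * (coef q.2 * binomPairSum a q.1.natAbs q.2)
  have hF : Summable F := by
    refine (summable_succ_mul_abs_mul_binomPairSum ha hcoef).of_norm_bounded fun q => ?_
    have hB := binomPairSum_nonneg ha q.1.natAbs q.2
    have hm : |(q.1 : ℝ)| = q.1.natAbs := by rw [Nat.cast_natAbs, Int.cast_abs]
    rw [Real.norm_eq_abs, abs_mul, abs_mul, abs_of_nonneg hB, hm]
    have := mul_le_mul_of_nonneg_left (cast_mul_binomPairSum_le ha q.1.natAbs q.2)
      (abs_nonneg (coef q.2))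
    linarith
  simpa only [F, tsum_mul_left, binomPairSeries] using hF.prod

end binomPairSeries

noncomputable def evenCoeff (x c : ℝ) (n : ℕ) : ℝ :=
  x ^ (2 * n) / (2 * n)! + c * (x ^ (2 * n + 1) / (2 * n + 1)!)

noncomputable def oddCoeff (x : ℝ) (n : ℕ) : ℝ := x ^ (2 * n + 1) / (2 * n + 1)!

theorem evenSeries_eq_binomPairSeries (x c ρ : ℝ) (m : ℕ) :
    evenSeries x c ρ m = binomPairSeries (evenCoeff x c) ρ⁻¹ m := by
  simp only [evenSeries, innerSum_eq_binomPairSum]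
  exact tsum_add_left_eq_binomPairSeries (evenCoeff x c) ρ⁻¹ m

theorem oddSeries_eq_binomPairSeries (x ρ : ℝ) (m : ℕ) :
    oddSeries x ρ m = binomPairSeries (oddCoeff x) ρ⁻¹ m := by
  simp only [oddSeries, innerSum_eq_binomPairSum]
  exact tsum_add_left_eq_binomPairSeries (oddCoeff x) ρ⁻¹ m

theorem hasSum_evenCoeff (y c : ℝ) : HasSum (evenCoeff y c) (cosh y + c * sinh y) :=
  (hasSum_cosh y).add ((hasSum_sinh y).mul_left c)

theorem evenCoeff_mul_pow (x c : ℝ) {s : ℝ} (hs : s ≠ 0) (n : ℕ) :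
    evenCoeff x c n * s ^ (2 * n) = evenCoeff (x * s) (c / s) n := by
  simp only [evenCoeff, mul_pow, pow_succ]
  field_simp

theorem oddCoeff_mul_pow (x : ℝ) {s : ℝ} (hs : s ≠ 0) (n : ℕ) :
    oddCoeff x n * s ^ (2 * n) = s⁻¹ * oddCoeff (x * s) n := by
  simp only [oddCoeff, mul_pow, pow_succ]
  field_simp

theorem summable_succ_mul_abs_pow_div_factorial (y : ℝ) :
    Summable fun n : ℕ => ((n : ℝ) + 1) * |y ^ n / n !| := by
  refine Summable.of_nonneg_of_le (fun n => by positivity) (fun n => ?_)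
    (Real.summable_pow_div_factorial (2 * |y|))
  rw [abs_div, abs_pow, Nat.abs_cast, mul_pow, mul_div_assoc]
  exact mul_le_mul_of_nonneg_right (by exact_mod_cast Nat.lt_two_pow_self) (by positivity)

theorem summable_succ_mul_abs_pow_two_mul_add_div_factorial (y : ℝ) (i : ℕ) :
    Summable fun n : ℕ => ((n : ℝ) + 1) * |y ^ (2 * n + i) / (2 * n + i)!| := by
  refine Summable.of_nonneg_of_le (fun n => by positivity)
    (fun n => mul_le_mul_of_nonneg_right ?_ (abs_nonneg _))
    ((summable_succ_mul_abs_pow_div_factorial y).comp_injective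
      (i := fun n => 2 * n + i) fun _ _ h => by simp only at h; omega)
  push_cast
  linarith [(n.cast_nonneg : (0 : ℝ) ≤ n)]

theorem summable_succ_mul_abs_evenCoeff_mul_pow (x c : ℝ) {s : ℝ} (hs : 0 < s) :
    Summable fun n : ℕ => ((n : ℝ) + 1) * |evenCoeff x c n| * s ^ (2 * n) := by
  refine Summable.of_nonneg_of_le (fun n => by positivity) (fun n => ?_)
    ((summable_succ_mul_abs_pow_two_mul_add_div_factorial (x * s) 0).add
      ((summable_succ_mul_abs_pow_two_mul_add_div_factorial (x * s) 1).mul_left |c / s|))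
  have hscale : |evenCoeff x c n| * s ^ (2 * n) = |evenCoeff (x * s) (c / s) n| := by
    rw [← evenCoeff_mul_pow x c hs.ne', abs_mul, abs_of_pos (pow_pos hs _)]
  rw [mul_assoc, hscale]
  calc ((n : ℝ) + 1) * |evenCoeff (x * s) (c / s) n|
      ≤ (n + 1) * (|(x * s) ^ (2 * n) / (2 * n)!| +
          |c / s| * |(x * s) ^ (2 * n + 1) / (2 * n + 1)!|) :=
        mul_le_mul_of_nonneg_left ((abs_add_le _ _).trans_eq (by rw [abs_mul])) (by positivity)
    _ = _ := by simp only [add_zero]; ring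

theorem summable_succ_mul_abs_oddCoeff_mul_pow (x : ℝ) {s : ℝ} (hs : 0 < s) :
    Summable fun n : ℕ => ((n : ℝ) + 1) * |oddCoeff x n| * s ^ (2 * n) := by
  refine ((summable_succ_mul_abs_pow_two_mul_add_div_factorial (x * s) 1).mul_left s⁻¹).congr
    fun n => ?_
  rw [mul_assoc, ← abs_of_pos (pow_pos hs (2 * n)), ← abs_mul, oddCoeff_mul_pow x hs.ne', abs_mul,
    abs_of_pos (inv_pos.mpr hs), oddCoeff]
  ring

section profiles

variable (x : ℝ) {ρ : ℝ}

theorem hasSum_evenSeries_natAbs (hρ : 0 < ρ) (c : ℝ) :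
    HasSum (fun m : ℤ => evenSeries x c ρ m.natAbs)
      (cosh (x * (1 + ρ⁻¹)) + c / (1 + ρ⁻¹) * sinh (x * (1 + ρ⁻¹))) := by
  have hs : 0 < 1 + ρ⁻¹ := by positivity
  simp only [evenSeries_eq_binomPairSeries]
  refine hasSum_binomPairSeries_natAbs (inv_pos.mpr hρ).le
    (summable_succ_mul_abs_evenCoeff_mul_pow x c hs) ?_
  simpa only [evenCoeff_mul_pow x c hs.ne'] using hasSum_evenCoeff (x * (1 + ρ⁻¹)) (c / (1 + ρ⁻¹))

theorem summable_mul_evenSeries_natAbs (hρ : 0 < ρ) (c : ℝ) :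
    Summable fun m : ℤ => (m : ℝ) * evenSeries x c ρ m.natAbs := by
  simpa only [evenSeries_eq_binomPairSeries] using summable_mul_binomPairSeries_natAbs
    (inv_pos.mpr hρ).le (summable_succ_mul_abs_evenCoeff_mul_pow x c (by positivity))

theorem hasSum_oddSeries_natAbs (hρ : 0 < ρ) :
    HasSum (fun m : ℤ => oddSeries x ρ m.natAbs) ((1 + ρ⁻¹)⁻¹ * sinh (x * (1 + ρ⁻¹))) := by
  have hs : 0 < 1 + ρ⁻¹ := by positivity
  simp only [oddSeries_eq_binomPairSeries]
  refine hasSum_binomPairSeries_natAbs (inv_pos.mpr hρ).le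
    (summable_succ_mul_abs_oddCoeff_mul_pow x hs) ?_
  simp only [oddCoeff_mul_pow x hs.ne']
  exact (hasSum_sinh _).mul_left _

theorem summable_mul_oddSeries_natAbs (hρ : 0 < ρ) :
    Summable fun m : ℤ => (m : ℝ) * oddSeries x ρ m.natAbs := by
  simpa only [oddSeries_eq_binomPairSeries] using summable_mul_binomPairSeries_natAbs
    (inv_pos.mpr hρ).le (summable_succ_mul_abs_oddCoeff_mul_pow x (by positivity))

end profiles

section transP

variable (lam mu t : ℝ)

theorem transP_two_mul_two_mul (l r : ℤ) :
    transP lam mu t (2 * l) (2 * r) = exp (-(lam + mu) * t) *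
      evenSeries (lam * t) ((mu - lam) / lam) (lam / mu) (r - l).natAbs := by
  simp [transP, pEE]

theorem transP_two_mul_two_mul_add_one_s12 (l r : ℤ) :
    transP lam mu t (2 * l) (2 * r + 1) = exp (-(lam + mu) * t) *
      (oddSeries (lam * t) (lam / mu) (r - l).natAbs +
        oddSeries (lam * t) (lam / mu) (r - (l - 1)).natAbs) := by
  simp [transP, pEO, sub_add]

theorem transP_two_mul_add_one_two_mul (l r : ℤ) :
    transP lam mu t (2 * l + 1) (2 * r) = exp (-(lam + mu) * t) *
      (oddSeries (mu * t) (mu / lam) (r - l - 1).natAbs +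
        oddSeries (mu * t) (mu / lam) (r - l).natAbs) := by
  simp [transP, pOE]

theorem transP_two_mul_add_one_two_mul_add_one (l r : ℤ) :
    transP lam mu t (2 * l + 1) (2 * r + 1) = exp (-(lam + mu) * t) *
      evenSeries (mu * t) ((lam - mu) / mu) (mu / lam) (r - l).natAbs := by
  simp [transP, pOO]

theorem transP_two_mul_add_one (l n : ℤ) :
    transP lam mu t (2 * l + 1) n = transP mu lam t (2 * -l) (1 - n) := by
  obtain ⟨r, rfl | rfl⟩ := Int.even_or_odd' n
  · rw [show 1 - 2 * r = 2 * -r + 1 by ring, transP_two_mul_add_one_two_mul,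
      transP_two_mul_two_mul_add_one_s12, add_comm mu lam, add_comm (oddSeries _ _ _),
      show (-r - -l).natAbs = (r - l).natAbs by omega,
      show (-r - (-l - 1)).natAbs = (r - l - 1).natAbs by omega]
  · rw [show 1 - (2 * r + 1) = 2 * -r by ring, transP_two_mul_add_one_two_mul_add_one,
      transP_two_mul_two_mul, add_comm mu lam, show (-r - -l).natAbs = (r - l).natAbs by omega]

theorem transP_two_mul_add_eq_sub (l d : ℤ) :
    transP lam mu t (2 * l) (2 * l + d) = transP lam mu t (2 * l) (2 * l - d) := by
  obtain ⟨s, rfl | rfl⟩ := Int.even_or_odd' d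
  · rw [← mul_add, ← mul_sub, transP_two_mul_two_mul, transP_two_mul_two_mul,
      show (l + s - l).natAbs = (l - s - l).natAbs by omega]
  · rw [← add_assoc, ← mul_add, show 2 * l - (2 * s + 1) = 2 * (l - s - 1) + 1 by ring,
      transP_two_mul_two_mul_add_one_s12, transP_two_mul_two_mul_add_one_s12,
      show (l + s - (l - 1)).natAbs = (l - s - 1 - l).natAbs by omega,
      show (l + s - l).natAbs = (l - s - 1 - (l - 1)).natAbs by omega, add_comm (oddSeries _ _ _)]

end transP

theorem symmetricUnitMass_transP_two_mul {lam mu : ℝ} (hlam : 0 < lam) (hmu : 0 < mu) (t : ℝ)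
    (l : ℤ) : SymmetricUnitMass (transP lam mu t (2 * l)) (2 * l) := by
  set E := exp (-(lam + mu) * t)
  set x := lam * t
  set c := (mu - lam) / lam
  set ρ := lam / mu
  set s := 1 + ρ⁻¹
  set z := (lam + mu) * t
  have hρ : 0 < ρ := div_pos hlam hmu
  have hxs : x * s = z := by simp only [x, s, z, ρ, inv_div]; field_simp
  have hE := hasSum_evenSeries_natAbs x hρ c
  have hO := hasSum_oddSeries_natAbs x hρ
  rw [hxs] at hE hO
  have hmass : E * (cosh z + c / s * sinh z) + E * (s⁻¹ * sinh z + s⁻¹ * sinh z) = 1 := by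
    have hcs : c / s + s⁻¹ + s⁻¹ = 1 := by simp only [c, s, ρ, inv_div]; field_simp; ring
    calc _ = E * (cosh z + (c / s + s⁻¹ + s⁻¹) * sinh z) := by ring
      _ = 1 := by rw [hcs, one_mul, cosh_add_sinh, ← exp_add, neg_mul, neg_add_cancel, exp_zero]
  refine ⟨hmass ▸ HasSum.int_even_add_odd ?_ ?_, Summable.int_even_add_odd ?_ ?_,
    transP_two_mul_add_eq_sub lam mu t l⟩
  · simpa only [transP_two_mul_two_mul] using (hE.comp_sub_right l).mul_left E
  · simpa only [transP_two_mul_two_mul_add_one_s12] using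
      ((hO.comp_sub_right l).add (hO.comp_sub_right (l - 1))).mul_left E
  · have hEm := summable_mul_evenSeries_natAbs x hρ c
    refine ((hE.summable.affine_mul_comp_sub hEm 2 0 l).mul_left E).congr fun r => ?_
    rw [transP_two_mul_two_mul]
    push_cast
    ring
  · have hOm := summable_mul_oddSeries_natAbs x hρ
    refine (((hO.summable.affine_mul_comp_sub hOm 2 1 l).add
      (hO.summable.affine_mul_comp_sub hOm 2 1 (l - 1))).mul_left E).congr fun r => ?_
    rw [transP_two_mul_two_mul_add_one_s12]
    push_cast
    ring

theorem mean_eq_initial_state_general (lam mu : ℝ) (hlam : 0 < lam) (hmu : 0 < mu)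
    (k : ℤ) (t : ℝ) :
    Summable (fun n : ℤ => |(n : ℝ) * transP lam mu t k n|) ∧
    ∑' n : ℤ, (n : ℝ) * transP lam mu t k n = (k : ℝ) := by
  have hp : SymmetricUnitMass (transP lam mu t k) k := by
    obtain ⟨l, rfl | rfl⟩ := Int.even_or_odd' k
    · exact symmetricUnitMass_transP_two_mul hlam hmu t l
    · have h := (symmetricUnitMass_transP_two_mul hmu hlam t (-l)).comp_one_sub
      rw [show 1 - 2 * -l = 2 * l + 1 by ring] at h
      rwa [← funext (transP_two_mul_add_one lam mu t l)] at h
  exact ⟨summable_abs_iff.mpr hp.summable_mul, hp.hasSum_mul.tsum_eq⟩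

/-- The mean of the process at any time equals the initial state. -/
theorem mean_eq_initial_state (lam mu : ℝ) (hlam : 0 < lam) (hmu : 0 < mu)
    (k : ℤ) (t : ℝ) (ht : 0 ≤ t) :
    Summable (fun n : ℤ => |(n : ℝ) * transP lam mu t k n|) ∧
    ∑' n : ℤ, (n : ℝ) * transP lam mu t k n = (k : ℝ) :=
  mean_eq_initial_state_general lam mu hlam hmu k t
end
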